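/- If p is an odd prime and q = p^e, then for every m ≥ 1 the linearized Wenger graph L_m(q) contains a cycle of length 6; combined with the absence of 4-cycles, its girth is 6. -/

import Mathlib

/-!
A 4-cycle would consist of two distinct points `P, P'` on two distinct common lines `L, L'`.
Subtracting the `k = 0` equations gives `(P 0 - P' 0) * (L 0 - L' 0) = 0`, and all the
equations together show that a point on a given line is determined by its first coordinate,
and likewise a line through a given point. So one of the two pairs coincides. Since the graph
is bipartite, every cycle then has length at least 6, and the explicit hexagon attains it.
-/

/-- In the linearized Wenger graph, point `P` is adjacent to line `L` iff
`l_k + p_k = p_1^{p^{k-2}} l_1` for `2 ≤ k ≤ m+1`. -/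
def lwAdj (p : ℕ) {F : Type} [Field F] {m : ℕ} (P L : Fin (m + 1) → F) : Prop :=
  ∀ k : Fin m, L k.succ + P k.succ = P 0 ^ p ^ (k : ℕ) * L 0

/-- The linearized Wenger graph `L_m(q)` as a bipartite graph on points ⊕ lines. -/
def lwGraph (p : ℕ) (F : Type) [Field F] (m : ℕ) :
    SimpleGraph ((Fin (m + 1) → F) ⊕ (Fin (m + 1) → F)) :=
  SimpleGraph.fromRel fun v w => match v, w with
    | Sum.inl P, Sum.inr L => lwAdj p P L
    | _, _ => False

namespace SimpleGraph

variable {V : Type*} {G : SimpleGraph V}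

theorem Walk.IsCycle.length_ne_four
    (hG : ∀ ⦃v w a b⦄, G.Adj v a → G.Adj w a → G.Adj v b → G.Adj w b → v = w ∨ a = b)
    {u : V} {c : G.Walk u u} (hc : c.IsCycle) : c.length ≠ 4 := by
  intro h4
  obtain _ | ⟨h₁, _ | ⟨h₂, _ | ⟨h₃, _ | ⟨h₄, _ | ⟨_, _⟩⟩⟩⟩⟩ := c <;>
    simp only [Walk.length_cons, Walk.length_nil] at h4 <;> try omega
  rw [Walk.isCycle_def] at hc
  simp only [Walk.support_cons, Walk.support_nil, List.tail_cons, List.nodup_cons,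
    List.mem_cons, List.not_mem_nil] at hc
  rcases hG h₁ h₂.symm h₄.symm h₃ with h | h <;> grind

theorem girth_eq_of_isCycle {n : ℕ} {u : V} {c : G.Walk u u} (hc : c.IsCycle)
    (hn : c.length = n) (hle : ∀ a (w : G.Walk a a), w.IsCycle → n ≤ w.length) :
    G.girth = n := by
  obtain ⟨a, w, hw, hgw⟩ := G.exists_girth_eq_length.2 fun hG => hG _ hc
  exact le_antisymm (hn ▸ girth_le_length hc) (hgw ▸ hle a w hw)

end SimpleGraph

theorem intCast_pow_expChar_pow {R : Type*} [CommRing R] (p : ℕ) [ExpChar R p] (n : ℤ) (k : ℕ) :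
    (n : R) ^ p ^ k = n :=
  map_intCast (iterateFrobenius R p k) n

section LinearizedWenger

variable {p : ℕ} {F : Type} [Field F] {m : ℕ}

theorem lwAdj.point_eq_of_apply_zero_eq {P P' L : Fin (m + 1) → F} (h : lwAdj p P L)
    (h' : lwAdj p P' L) (h0 : P 0 = P' 0) : P = P' := by
  refine funext (Fin.cases h0 fun k => ?_)
  linear_combination (h k) - h' k + L 0 * congrArg (· ^ p ^ (k : ℕ)) h0

theorem lwAdj.line_eq_of_apply_zero_eq {P L L' : Fin (m + 1) → F} (h : lwAdj p P L)
    (h' : lwAdj p P L') (h0 : L 0 = L' 0) : L = L' := by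
  refine funext (Fin.cases h0 fun k => ?_)
  linear_combination (h k) - h' k + P 0 ^ p ^ (k : ℕ) * h0

theorem lwAdj.point_eq_or_line_eq (hm : 0 < m) {P P' L L' : Fin (m + 1) → F}
    (h₁ : lwAdj p P L) (h₂ : lwAdj p P' L) (h₃ : lwAdj p P L') (h₄ : lwAdj p P' L') :
    P = P' ∨ L = L' := by
  have key : (P 0 - P' 0) * (L 0 - L' 0) = 0 := by
    have first (Q M : Fin (m + 1) → F) (h : lwAdj p Q M) :
        M (Fin.succ ⟨0, hm⟩) + Q (Fin.succ ⟨0, hm⟩) = Q 0 * M 0 := by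
      simpa using h ⟨0, hm⟩
    linear_combination first _ _ h₂ + first _ _ h₃ - first _ _ h₁ - first _ _ h₄
  rcases mul_eq_zero.1 key with h | h
  · exact .inl (h₁.point_eq_of_apply_zero_eq h₂ (sub_eq_zero.1 h))
  · exact .inr (h₁.line_eq_of_apply_zero_eq h₃ (sub_eq_zero.1 h))

@[simp]
theorem lwGraph_adj_inl_inr {P L : Fin (m + 1) → F} :
    (lwGraph p F m).Adj (.inl P) (.inr L) ↔ lwAdj p P L := by
  simp [lwGraph]

@[simp]
theorem lwGraph_adj_inr_inl {P L : Fin (m + 1) → F} :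
    (lwGraph p F m).Adj (.inr L) (.inl P) ↔ lwAdj p P L := by
  simp [lwGraph]

@[simp]
theorem lwGraph_not_adj_inl_inl {P P' : Fin (m + 1) → F} :
    ¬(lwGraph p F m).Adj (.inl P) (.inl P') := by
  simp [lwGraph]

@[simp]
theorem lwGraph_not_adj_inr_inr {L L' : Fin (m + 1) → F} :
    ¬(lwGraph p F m).Adj (.inr L) (.inr L') := by
  simp [lwGraph]

def lwGraph.bicoloring : (lwGraph p F m).Coloring Bool :=
  SimpleGraph.Coloring.mk Sum.isLeft fun {v w} h => by
    cases v <;> cases w <;> simp_all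

theorem lwGraph_eq_or_eq_of_adj (hm : 0 < m)
    ⦃v w a b : (Fin (m + 1) → F) ⊕ (Fin (m + 1) → F)⦄ (hva : (lwGraph p F m).Adj v a)
    (hwa : (lwGraph p F m).Adj w a) (hvb : (lwGraph p F m).Adj v b)
    (hwb : (lwGraph p F m).Adj w b) : v = w ∨ a = b := by
  rcases v with P | L <;> rcases w with P' | L' <;> rcases a with P₁ | L₁ <;>
    rcases b with P₂ | L₂ <;> simp_all
  · exact lwAdj.point_eq_or_line_eq hm hva hwa hvb hwb
  · exact (lwAdj.point_eq_or_line_eq hm hva hvb hwa hwb).symm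

theorem lwGraph_six_le_length (hm : 0 < m) {u} {c : (lwGraph p F m).Walk u u}
    (hc : c.IsCycle) : 6 ≤ c.length := by
  have h_even : Even c.length := (lwGraph.bicoloring.even_length_iff_congr c).2 Iff.rfl
  have h_ne_four := hc.length_ne_four (lwGraph_eq_or_eq_of_adj hm)
  have := hc.three_le_length
  obtain ⟨k, hk⟩ := h_even
  omega

theorem lwGraph_exists_isCycle_length_six [ExpChar F p] (h2 : (2 : F) ≠ 0) :
    ∃ (v : (Fin (m + 1) → F) ⊕ (Fin (m + 1) → F)) (c : (lwGraph p F m).Walk v v),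
      c.IsCycle ∧ c.length = 6 := by
  have hp : p ≠ 0 := (expChar_pos F p).ne'
  -- `-1` and `-2` lie in the prime field, so every `p ^ k`-th power fixes them
  have h_neg_one (k : ℕ) : (-1 : F) ^ p ^ k = -1 := by
    exact_mod_cast intCast_pow_expChar_pow p (-1 : ℤ) k
  have h_neg_two (k : ℕ) : (-2 : F) ^ p ^ k = -2 := by
    exact_mod_cast intCast_pow_expChar_pow p (-2 : ℤ) k
  let P₁ : Fin (m + 1) → F := 0
  let P₂ : Fin (m + 1) → F := fun _ => -1
  let P₃ : Fin (m + 1) → F := Fin.cons (-2) 0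
  let L₁ : Fin (m + 1) → F := Fin.cons 1 0
  let L₂ : Fin (m + 1) → F := Fin.cons (-1) fun _ => 2
  let L₃ : Fin (m + 1) → F := 0
  have e₁ : lwAdj p P₁ L₁ := fun k => by simp [P₁, L₁, hp]
  have e₂ : lwAdj p P₂ L₁ := fun k => by simp [P₂, L₁, h_neg_one]
  have e₃ : lwAdj p P₂ L₂ := fun k => by simp [P₂, L₂, h_neg_one]; norm_num
  have e₄ : lwAdj p P₃ L₂ := fun k => by simp [P₃, L₂, h_neg_two]
  have e₅ : lwAdj p P₃ L₃ := fun k => by simp [P₃, L₃]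
  have e₆ : lwAdj p P₁ L₃ := fun k => by simp [P₁, L₃]
  let c : (lwGraph p F m).Walk (.inl P₁) (.inl P₁) :=
    .cons (lwGraph_adj_inl_inr.2 e₁) <| .cons (lwGraph_adj_inr_inl.2 e₂) <|
      .cons (lwGraph_adj_inl_inr.2 e₃) <| .cons (lwGraph_adj_inr_inl.2 e₄) <|
      .cons (lwGraph_adj_inl_inr.2 e₅) <| .cons (lwGraph_adj_inr_inl.2 e₆) .nil
  have hP₁₂ : P₁ ≠ P₂ := ne_of_apply_ne (· 0) (by simp [P₁, P₂])
  have hP₁₃ : P₁ ≠ P₃ := ne_of_apply_ne (· 0) (by simp [P₁, P₃, h2])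
  have hP₂₃ : P₂ ≠ P₃ := ne_of_apply_ne (· 0) (by simp [P₂, P₃]; grind)
  have hL₁₂ : L₁ ≠ L₂ := ne_of_apply_ne (· 0) (by simp [L₁, L₂]; grind)
  have hL₁₃ : L₁ ≠ L₃ := ne_of_apply_ne (· 0) (by simp [L₁, L₃])
  have hL₂₃ : L₂ ≠ L₃ := ne_of_apply_ne (· 0) (by simp [L₂, L₃])
  refine ⟨_, c, ?_, rfl⟩
  rw [SimpleGraph.Walk.cons_isCycle_iff]
  constructor
  · apply SimpleGraph.Walk.IsPath.mk'
    simp [hP₂₃, hL₁₂, hL₁₃, hL₂₃, hP₁₂.symm, hP₁₃.symm]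
  · simp [hP₁₂, hP₁₃, hL₁₂, hL₁₃]

end LinearizedWenger

theorem stmt13_general (p e m : ℕ) [Fact p.Prime] (hp : Odd p) (hm : 1 ≤ m) :
    (∃ (v : (Fin (m + 1) → GaloisField p e) ⊕ (Fin (m + 1) → GaloisField p e))
        (c : (lwGraph p (GaloisField p e) m).Walk v v), c.IsCycle ∧ c.length = 6) ∧
    (lwGraph p (GaloisField p e) m).girth = 6 := by
  have h2 : (2 : GaloisField p e) ≠ 0 := by
    refine Ring.two_ne_zero ?_
    rw [ringChar.eq (GaloisField p e) p]
    exact hp.ne_two_of_dvd_nat dvd_rfl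
  obtain ⟨v, c, hc, hlen⟩ := lwGraph_exists_isCycle_length_six (p := p) (m := m) h2
  exact ⟨⟨v, c, hc, hlen⟩, SimpleGraph.girth_eq_of_isCycle hc hlen
    fun _ _ hw => lwGraph_six_le_length hm hw⟩

/-- For odd prime `p`, the linearized Wenger graph `L_m(q)` has girth `6`. -/
theorem stmt13 (p e m : ℕ) [Fact p.Prime] (hp : Odd p) (he : 1 ≤ e) (hm : 1 ≤ m) :
    (∃ (v : (Fin (m + 1) → GaloisField p e) ⊕ (Fin (m + 1) → GaloisField p e))
        (c : (lwGraph p (GaloisField p e) m).Walk v v), c.IsCycle ∧ c.length = 6) ∧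
    (lwGraph p (GaloisField p e) m).girth = 6 :=
  stmt13_general p e m hp hm
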